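/- arXiv:1204.2843 — 5 statements merged into one kernel-verified Lean document; each statement's English description precedes it below -/
import Mathlib

section
/- Let G be a subgroup of Aut(X*) containing a spherically transitive element, and define Y_n : G_∞ → ℕ by Y_n(g) = #{v ∈ X^n : π_n(g)(v) = v}. Then the fixed-point process (Y_n)_{n≥1} is a martingale on (G_∞, μ): for every n ≥ 2 and all non-negative integers t_1, …, t_{n−1} with μ(Y_1 = t_1, …, Y_{n−1} = t_{n−1}) > 0, the conditional expectation E(Y_n | Y_1 = t_1, …, Y_{n−1} = t_{n−1}) equals t_{n−1}. -/
/-- The automorphism group of the rooted `d`-ary tree `X*` (words over `Fin d`),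
realized as the subgroup of permutations of `List (Fin d)` preserving word length
and the prefix relation. -/
def treeAutGroup (d : ℕ) : Subgroup (Equiv.Perm (List (Fin d))) where
  carrier := {g | (∀ v, (g v).length = v.length) ∧ ∀ v w, v <+: w ↔ g v <+: g w}
  one_mem' := ⟨fun _ => rfl, fun _ _ => Iff.rfl⟩
  mul_mem' := by
    rintro a b ⟨ha1, ha2⟩ ⟨hb1, hb2⟩
    refine ⟨fun v => ?_, fun v w => ?_⟩
    · simpa [Equiv.Perm.mul_apply] using (ha1 (b v)).trans (hb1 v)
    · simpa [Equiv.Perm.mul_apply] using (hb2 v w).trans (ha2 (b v) (b w))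
  inv_mem' := by
    rintro g ⟨h1, h2⟩
    refine ⟨fun v => ?_, fun v w => ?_⟩
    · conv_rhs => rw [← (show g (g⁻¹ v) = v from Equiv.apply_symm_apply g v)]
      exact (h1 _).symm
    · have := (h2 (g⁻¹ v) (g⁻¹ w)).symm
      simpa [Equiv.apply_symm_apply] using this

/-- An automorphism of the rooted `d`-ary tree. -/
abbrev TreeAut (d : ℕ) : Type := ↥(treeAutGroup d)

namespace TreeAut

variable {d : ℕ}

theorem length_apply (g : TreeAut d) (v : List (Fin d)) :
    ((g : Equiv.Perm (List (Fin d))) v).length = v.length := g.2.1 v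

theorem prefix_iff (g : TreeAut d) (v w : List (Fin d)) :
    v <+: w ↔ (g : Equiv.Perm (List (Fin d))) v <+: (g : Equiv.Perm (List (Fin d))) w :=
  g.2.2 v w

theorem apply_append (g : TreeAut d) (v w : List (Fin d)) :
    (g : Equiv.Perm (List (Fin d))) (v ++ w) =
      (g : Equiv.Perm (List (Fin d))) v ++
        (((g : Equiv.Perm (List (Fin d))) (v ++ w)).drop v.length) := by
  obtain ⟨t, ht⟩ := (g.prefix_iff v (v ++ w)).mp ⟨w, rfl⟩
  rw [← ht, List.drop_left' (g.length_apply v)]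

/-- The restriction of a tree automorphism at the vertex `v`, as a permutation of words:
the unique map with `g (v ++ w) = g v ++ (restrictPerm g v) w`. -/
def restrictPerm (g : TreeAut d) (v : List (Fin d)) : Equiv.Perm (List (Fin d)) where
  toFun w := (((g : Equiv.Perm (List (Fin d)))) (v ++ w)).drop v.length
  invFun w := (((g : Equiv.Perm (List (Fin d))).symm)
      (((g : Equiv.Perm (List (Fin d))) v) ++ w)).drop v.length
  left_inv w := by
    dsimp only
    have h := (g.apply_append v w).symm
    rw [h, Equiv.symm_apply_apply, List.drop_left]
  right_inv w := by
    dsimp only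
    have hpre : v <+: (g : Equiv.Perm (List (Fin d))).symm
        ((g : Equiv.Perm (List (Fin d))) v ++ w) := by
      have := (g.prefix_iff v ((g : Equiv.Perm (List (Fin d))).symm
        ((g : Equiv.Perm (List (Fin d))) v ++ w))).symm
      rw [Equiv.apply_symm_apply] at this
      exact this.mp ⟨w, rfl⟩
    obtain ⟨u, hu⟩ := hpre
    rw [← hu, List.drop_left]
    have h2 : (g : Equiv.Perm (List (Fin d))) (v ++ u) =
        (g : Equiv.Perm (List (Fin d))) v ++ w := by rw [hu, Equiv.apply_symm_apply]
    rw [h2, List.drop_left' (g.length_apply v)]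

theorem restrictPerm_mem (g : TreeAut d) (v : List (Fin d)) :
    restrictPerm g v ∈ treeAutGroup d := by
  constructor
  · intro w
    show (((g : Equiv.Perm (List (Fin d))) (v ++ w)).drop v.length).length = w.length
    rw [List.length_drop, g.length_apply, List.length_append]
    omega
  · intro w w'
    show w <+: w' ↔
      ((g : Equiv.Perm (List (Fin d))) (v ++ w)).drop v.length <+:
        ((g : Equiv.Perm (List (Fin d))) (v ++ w')).drop v.length
    calc w <+: w' ↔ v ++ w <+: v ++ w' := (List.prefix_append_right_inj v).symm
      _ ↔ (g : Equiv.Perm (List (Fin d))) (v ++ w) <+: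
            (g : Equiv.Perm (List (Fin d))) (v ++ w') := g.prefix_iff _ _
      _ ↔ _ := by
            conv_lhs => rw [g.apply_append v w, g.apply_append v w']
            exact List.prefix_append_right_inj _

/-- The restriction `g|_v` of a tree automorphism `g` at a vertex `v`, as a tree
automorphism: the unique automorphism with `g (v ++ w) = g v ++ g|_v w` for all `w`. -/
def restrict (g : TreeAut d) (v : List (Fin d)) : TreeAut d :=
  ⟨restrictPerm g v, restrictPerm_mem g v⟩

/-- `g` fixes the end (infinite word) `w` of the tree: it fixes every finite initial
segment of `w`. -/
def FixesEnd (g : TreeAut d) (w : ℕ → Fin d) : Prop :=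
  ∀ n : ℕ, (g : Equiv.Perm (List (Fin d))) ((List.range n).map w) = (List.range n).map w

end TreeAut

/-- `g` is spherically transitive: the cyclic group it generates acts transitively on
the words of length `n`, for every `n ≥ 1`. -/
def SphericallyTransitive {d : ℕ} (g : TreeAut d) : Prop :=
  ∀ n : ℕ, 1 ≤ n → ∀ v w : List (Fin d), v.length = n → w.length = n →
    ∃ k : ℤ, ((g ^ k : TreeAut d) : Equiv.Perm (List (Fin d))) v = w

/-- The `n`-th level of the tree: words of length `n`. -/
abbrev Level (d n : ℕ) : Type := {v : List (Fin d) // v.length = n}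

instance Level.finite (d n : ℕ) : Finite (Level d n) := by
  have key : ∀ v : Level d n,
      v.1 = List.ofFn (fun i : Fin n => v.1.get (Fin.cast v.2.symm i)) := by
    intro v
    refine List.ext_get (by simp [v.2]) ?_
    intro i h1 h2
    simp [List.get_ofFn, Fin.cast]
  refine Finite.of_injective
    (fun v : Level d n => fun i : Fin n => v.1.get (Fin.cast v.2.symm i)) ?_
  intro v w h
  have h' : (fun i : Fin n => v.1.get (Fin.cast v.2.symm i)) =
      (fun i : Fin n => w.1.get (Fin.cast w.2.symm i)) := h
  refine Subtype.ext ?_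
  rw [key v, key w, h']

/-- The action of a tree automorphism on the `n`-th level of the tree. -/
def levelHom (d n : ℕ) : TreeAut d →* Equiv.Perm (Level d n) where
  toFun g :=
    { toFun := fun v => ⟨(g : Equiv.Perm (List (Fin d))) v.1, by rw [g.2.1, v.2]⟩
      invFun := fun v => ⟨((g⁻¹ : TreeAut d) : Equiv.Perm (List (Fin d))) v.1,
        by rw [(g⁻¹ : TreeAut d).2.1, v.2]⟩
      left_inv := fun v => Subtype.ext (by simp)
      right_inv := fun v => Subtype.ext (by simp) }
  map_one' := by ext v; rfl
  map_mul' g h := by ext v; rfl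

/-- The fraction of elements of `G_n` (the image of `G` acting on level `n`)
having at least one fixed point on level `n`. -/
noncomputable def fixedRatio {d : ℕ} (G : Subgroup (TreeAut d)) (n : ℕ) : ℝ :=
  (Nat.card {p : Equiv.Perm (Level d n) // p ∈ G.map (levelHom d n) ∧ ∃ v, p v = v} : ℝ) /
    (Nat.card (G.map (levelHom d n)) : ℝ)

/-- `G ≤ Aut(X*)` is contracting: there is a finite subset `N ⊆ G` such that every
`g ∈ G` has all its restrictions at sufficiently long words inside `N`. -/
def Contracting {d : ℕ} (G : Subgroup (TreeAut d)) : Prop :=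
  ∃ N : Set (TreeAut d), N.Finite ∧ N ⊆ (G : Set (TreeAut d)) ∧
    ∀ g ∈ G, ∃ m : ℕ, 1 ≤ m ∧ ∀ v : List (Fin d), m ≤ v.length → TreeAut.restrict g v ∈ N

/-- The set `N₁` of elements of `G` fixing a non-empty word `v` with `g|_v = g`. -/
def N1 {d : ℕ} (G : Subgroup (TreeAut d)) : Set (TreeAut d) :=
  {g | g ∈ G ∧ ∃ v : List (Fin d), v ≠ [] ∧ TreeAut.restrict g v = g ∧
    (g : Equiv.Perm (List (Fin d))) v = v}

section Profinite

/-- Permutation groups of (finite) levels carry the discrete topology. -/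
instance (α : Type*) : TopologicalSpace (Equiv.Perm α) := ⊥

instance (α : Type*) : DiscreteTopology (Equiv.Perm α) := ⟨rfl⟩

instance (α : Type*) : IsTopologicalGroup (Equiv.Perm α) where
  continuous_mul := continuous_of_discreteTopology
  continuous_inv := continuous_of_discreteTopology

instance (d n : ℕ) : Finite (Equiv.Perm (Level d n)) := by
  have : Finite (Level d n) := Level.finite d n
  exact Finite.of_injective (fun e : Equiv.Perm (Level d n) => (⇑e, ⇑e.symm))
    (fun e e' h => Equiv.ext fun v => congrFun (Prod.mk.injEq _ _ _ _ ▸ h).1 v)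

/-- The simultaneous action of a tree automorphism on all levels of the tree. -/
def prodHom (d : ℕ) : TreeAut d →* Π n : ℕ, Equiv.Perm (Level d n) :=
  Pi.monoidHom fun n => levelHom d n

/-- `G∞`: the closure of (the image of) `G` in the profinite group `Π_n Sym(X^n)`;
equivalently, the inverse limit of the finite groups `G_n`. -/
def Ginf {d : ℕ} (G : Subgroup (TreeAut d)) : Subgroup (Π n : ℕ, Equiv.Perm (Level d n)) :=
  (G.map (prodHom d)).topologicalClosure

instance {d : ℕ} (G : Subgroup (TreeAut d)) : CompactSpace (Ginf G) :=
  isCompact_iff_compactSpace.mp ((Subgroup.isClosed_topologicalClosure _).isCompact)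

instance {d : ℕ} (G : Subgroup (TreeAut d)) : MeasurableSpace (Ginf G) := borel _

instance {d : ℕ} (G : Subgroup (TreeAut d)) : BorelSpace (Ginf G) := ⟨rfl⟩

/-- `Y_n(g)`: the number of fixed points of `π_n(g)` on the `n`-th level `X^n`. -/
noncomputable def Ynat {d : ℕ} (G : Subgroup (TreeAut d)) (n : ℕ) (g : Ginf G) : ℕ :=
  Nat.card {v : Level d n // (g : Π m : ℕ, Equiv.Perm (Level d m)) n v = v}

/-- An element `g` of `G∞` fixes the end `w ∈ X^ω` if it fixes every finite initial
segment of `w`. -/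
def GinfFixesEnd {d : ℕ} {G : Subgroup (TreeAut d)} (g : Ginf G) (w : ℕ → Fin d) : Prop :=
  ∀ n : ℕ, (g : Π m : ℕ, Equiv.Perm (Level d m)) n ⟨(List.range n).map w, by simp⟩ =
    ⟨(List.range n).map w, by simp⟩

end Profinite

/-!
Let `a ∈ G` be spherically transitive, `D` the order of its action on level `n - 1` and
`b = a ^ D`. Then `b` acts trivially on the levels below `n`, and since the cyclic group `⟨a⟩`
is abelian and transitive on each level it acts freely there; so the orbits of `⟨b⟩` on level `n`
are exactly the sets of siblings, on which `⟨b⟩` acts simply transitively. Summing the level-`n`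
fixed points of `b ^ j * g` over a period `j < e` of `b` therefore counts the words `c` with
`g c` a sibling of `c`, which is `e * Y_{n-1}(g)`. Left multiplication by `b` preserves Haar
measure and the event `{Y_1 = t 1, …, Y_{n-1} = t (n-1)}`, so on that event `Y_n` has the
same integral as this average, namely `t (n-1)` times the measure of the event.
-/

open Equiv Finset MeasureTheory

namespace Equiv.Perm

variable {α β : Type*}

theorem eq_one_of_mem_zpowers_of_apply_eq {σ h : Perm α}
    (hσ : ∀ c c' : α, ∃ k : ℕ, (σ ^ k) c = c') (hh : h ∈ Subgroup.zpowers σ) {c : α}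
    (hc : h c = c) : h = 1 := by
  obtain ⟨s, rfl⟩ := Subgroup.mem_zpowers_iff.mp hh
  ext c'
  obtain ⟨k, rfl⟩ := hσ c c'
  rw [one_apply, ← mul_apply, (((Commute.refl σ).zpow_left s).pow_right k).eq, mul_apply, hc]

theorem exists_pow_pow_orderOf_apply_eq_iff {σ : Perm α} {τ : Perm β} {π : α → β}
    (hπ : Function.Semiconj π σ τ) (hσ : ∀ c c' : α, ∃ k : ℕ, (σ ^ k) c = c')
    (hτ : ∀ b b' : β, ∃ k : ℕ, (τ ^ k) b = b') (c c' : α) :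
    (∃ k : ℕ, ((σ ^ orderOf τ) ^ k) c = c') ↔ π c = π c' := by
  have hπ_pow : ∀ k c, π ((σ ^ k) c) = (τ ^ k) (π c) := fun k c => by
    simpa only [coe_pow] using hπ.iterate_right k c
  constructor
  · rintro ⟨k, rfl⟩
    rw [← pow_mul, hπ_pow, pow_mul, pow_orderOf_eq_one, one_pow, one_apply]
  · intro h
    obtain ⟨m, rfl⟩ := hσ c c'
    rw [hπ_pow] at h
    obtain ⟨q, rfl⟩ := orderOf_dvd_of_pow_eq_one <|
      eq_one_of_mem_zpowers_of_apply_eq hτ (pow_mem (Subgroup.mem_zpowers τ) m) h.symm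
    exact ⟨q, by rw [pow_mul]⟩

variable [DecidableEq α] [DecidableEq β]

theorem card_filter_pow_apply_eq [Finite α] {K : Perm α} {π : α → β}
    (hK : ∀ c c', (∃ k : ℕ, (K ^ k) c = c') ↔ π c = π c')
    (hfree : ∀ g ∈ Subgroup.zpowers K, ∀ c, g c = c → g = 1) (c c' : α) :
    #{j ∈ range (orderOf K) | (K ^ j) c = c'} = if π c = π c' then 1 else 0 := by
  have hK_mem : ∀ j : ℕ, K ^ j ∈ Subgroup.zpowers K := pow_mem (Subgroup.mem_zpowers K)
  split_ifs with h
  · obtain ⟨k, hk⟩ := (hK c c').mpr h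
    have hk_lt := Nat.mod_lt k (orderOf_pos K)
    rw [card_eq_one]
    refine ⟨k % orderOf K, eq_singleton_iff_unique_mem.mpr ⟨?_, fun j hj => ?_⟩⟩
    · simpa only [mem_filter, mem_range, pow_mod_orderOf] using ⟨hk_lt, hk⟩
    · rw [mem_filter, mem_range] at hj
      refine pow_injOn_Iio_orderOf hj.1 hk_lt ?_
      change K ^ j = K ^ (k % orderOf K)
      rw [pow_mod_orderOf, ← inv_mul_eq_one]
      refine hfree _ (mul_mem (inv_mem (hK_mem j)) (hK_mem k)) c ?_
      rw [mul_apply, hk, ← hj.2, inv_def, symm_apply_apply]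
  · rw [card_eq_zero, filter_eq_empty_iff]
    exact fun j _ hj => h ((hK c c').mp ⟨j, hj⟩)

theorem sum_card_fixedPoints_pow_mul [Finite α] {K x : Perm α} {π : α → β} {y : β → β}
    (hπ : Function.Surjective π) (hK : ∀ c c', (∃ k : ℕ, (K ^ k) c = c') ↔ π c = π c')
    (hfree : ∀ g ∈ Subgroup.zpowers K, ∀ c, g c = c → g = 1) (hxy : Function.Semiconj π x y) :
    ∑ j ∈ range (orderOf K), Nat.card {c // (K ^ j * x) c = c} =
      orderOf K * Nat.card {b // y b = b} := by
  have := Fintype.ofFinite α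
  have := Fintype.ofSurjective π hπ
  have hcount := card_filter_pow_apply_eq hK hfree
  have hfiber : ∀ b, #{c | π c = b} = orderOf K := by
    intro b
    obtain ⟨c₀, rfl⟩ := hπ b
    calc #{c | π c = π c₀}
        = ∑ c, #{j ∈ range (orderOf K) | (K ^ j) c₀ = c} := by
          rw [card_filter]
          exact sum_congr rfl fun c _ => by rw [hcount]; exact if_congr eq_comm rfl rfl
      _ = ∑ j ∈ range (orderOf K), #{c | (K ^ j) c₀ = c} := by
          simp only [card_filter]; exact sum_comm
      _ = orderOf K := by simp only [filter_eq, mem_univ, if_true, card_singleton, sum_const,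
          card_range, smul_eq_mul, mul_one]
  calc ∑ j ∈ range (orderOf K), Nat.card {c // (K ^ j * x) c = c}
      = ∑ c, #{j ∈ range (orderOf K) | (K ^ j) (x c) = c} := by
        simp only [Nat.card_eq_fintype_card, Fintype.card_subtype, card_filter, mul_apply]
        exact sum_comm
    _ = ∑ c, if y (π c) = π c then 1 else 0 := by simp only [hcount, hxy.eq]
    _ = ∑ b, ∑ c with π c = b, if y b = b then 1 else 0 :=
        (sum_fiberwise' univ π fun b => if y b = b then 1 else 0).symm
    _ = ∑ b, #{c | π c = b} * if y b = b then 1 else 0 := by simp only [sum_const, smul_eq_mul]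
    _ = orderOf K * Nat.card {b // y b = b} := by
        simp only [hfiber, ← mul_sum, Nat.card_eq_fintype_card, Fintype.card_subtype, card_filter]

end Equiv.Perm

theorem setIntegral_sum_pow_mul {M E : Type*} [Group M] [MeasurableSpace M] [MeasurableMul M]
    [NormedAddCommGroup E] [NormedSpace ℝ E] (μ : Measure M) [μ.IsMulLeftInvariant]
    {f : M → E} (hf : Integrable f μ) {s : Set M} {b : M} (hs : ∀ g, b * g ∈ s ↔ g ∈ s)
    (e : ℕ) : ∫ g in s, ∑ j ∈ range e, f (b ^ j * g) ∂μ = e • ∫ g in s, f g ∂μ := by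
  have hs_pow : ∀ j : ℕ, (b ^ j * ·) ⁻¹' s = s := by
    intro j
    induction j with
    | zero => simp only [pow_zero, one_mul, Set.preimage_id']
    | succ j ih =>
      ext g
      rw [Set.mem_preimage, pow_succ, mul_assoc, ← Set.mem_preimage (f := (b ^ j * ·)), ih, hs]
  have h_shift : ∀ j : ℕ, ∫ g in s, f (b ^ j * g) ∂μ = ∫ g in s, f g ∂μ := by
    intro j
    conv_lhs => rw [← hs_pow j]
    exact (measurePreserving_mul_left μ _).setIntegral_preimage_emb
      (measurableEmbedding_mulLeft _) f s
  rw [integral_finsetSum _ fun j _ => (hf.comp_mul_left _).integrableOn]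
  simp only [h_shift, sum_const, card_range]

section Tree

variable {d : ℕ}

namespace Level

def trunc {i n : ℕ} (h : i ≤ n) (c : Level d n) : Level d i :=
  ⟨c.1.take i, by simp [c.2, h]⟩

theorem trunc_surjective [NeZero d] {i n : ℕ} (h : i ≤ n) :
    Function.Surjective (trunc (d := d) h) := fun v =>
  ⟨⟨v.1 ++ List.replicate (n - i) 0, by simp [v.2, h]⟩, Subtype.ext (List.take_left' v.2)⟩

end Level

theorem levelHom_semiconj_trunc (g : TreeAut d) {i n : ℕ} (h : i ≤ n) :
    Function.Semiconj (Level.trunc h) (levelHom d n g) (levelHom d i g) := by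
  intro c
  have hpre := (g.prefix_iff _ _).mp (List.take_prefix i c.1)
  rw [List.prefix_iff_eq_take, g.length_apply, List.length_take, c.2, min_eq_left h] at hpre
  exact Subtype.ext hpre.symm

theorem levelHom_eq_one_of_le [NeZero d] {g : TreeAut d} {i n : ℕ} (h : i ≤ n)
    (hg : levelHom d n g = 1) : levelHom d i g = 1 := by
  ext1 v
  obtain ⟨c, rfl⟩ := Level.trunc_surjective h v
  rw [← levelHom_semiconj_trunc g h c, hg]
  rfl

theorem SphericallyTransitive.exists_pow_levelHom_apply_eq {a : TreeAut d}
    (ha : SphericallyTransitive a) {m : ℕ} (hm : 1 ≤ m) (v w : Level d m) :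
    ∃ k : ℕ, (levelHom d m a ^ k) v = w := by
  obtain ⟨j, hj⟩ := ha m hm v.1 w.1 v.2 w.2
  obtain ⟨k, hk⟩ := (isOfFinOrder_of_finite (levelHom d m a)).mem_powers_iff_mem_zpowers.mpr
    ⟨j, rfl⟩
  refine ⟨k, Subtype.ext ?_⟩
  rwa [show levelHom d m a ^ k = levelHom d m a ^ j from hk, ← map_zpow]

theorem semiconj_trunc_of_mem_Ginf {G : Subgroup (TreeAut d)}
    {p : Π m : ℕ, Perm (Level d m)} (hp : p ∈ Ginf G) {i n : ℕ} (h : i ≤ n) :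
    Function.Semiconj (Level.trunc h) (p n) (p i) := by
  have hclosed : IsClosed ((fun q : Π m : ℕ, Perm (Level d m) => (q n, q i)) ⁻¹'
      {z | Function.Semiconj (Level.trunc h) z.1 z.2}) :=
    (isClosed_discrete {z : Perm (Level d n) × Perm (Level d i) |
      Function.Semiconj (Level.trunc h) z.1 z.2}).preimage
      ((continuous_apply n).prodMk (continuous_apply i))
  refine closure_minimal ?_ hclosed hp
  rintro _ ⟨g, -, rfl⟩
  exact levelHom_semiconj_trunc g h

theorem continuous_Ynat (G : Subgroup (TreeAut d)) (n : ℕ) : Continuous (Ynat G n) :=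
  (continuous_of_discreteTopology (f := fun p : Perm (Level d n) =>
    Nat.card {v // p v = v})).comp ((continuous_apply n).comp continuous_subtype_val)

theorem Ynat_mul_of_apply_eq_one {G : Subgroup (TreeAut d)} {i : ℕ} {h : Ginf G}
    (hh : (h : Π m : ℕ, Perm (Level d m)) i = 1) (g : Ginf G) :
    Ynat G i (h * g) = Ynat G i g := by
  simp [Ynat, hh]

theorem sum_Ynat_pow_mul [NeZero d] {G : Subgroup (TreeAut d)} {a : TreeAut d}
    (ha : SphericallyTransitive a) {n : ℕ} (hn : 2 ≤ n) {b : Ginf G}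
    (hb : (b : Π m : ℕ, Perm (Level d m)) n =
      levelHom d n (a ^ orderOf (levelHom d (n - 1) a))) (g : Ginf G) :
    ∑ j ∈ range (orderOf ((b : Π m : ℕ, Perm (Level d m)) n)), Ynat G n (b ^ j * g) =
      orderOf ((b : Π m : ℕ, Perm (Level d m)) n) * Ynat G (n - 1) g := by
  classical
  have hσ := ha.exists_pow_levelHom_apply_eq (m := n) (by omega)
  have hτ := ha.exists_pow_levelHom_apply_eq (m := n - 1) (by omega)
  have hYnat : ∀ j, Ynat G n (b ^ j * g) = Nat.card {c // (((b : Π m : ℕ,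
      Perm (Level d m)) n) ^ j * (g : Π m : ℕ, Perm (Level d m)) n) c = c} :=
    fun j => rfl
  have hfree : ∀ h ∈ Subgroup.zpowers (levelHom d n a ^ orderOf (levelHom d (n - 1) a)),
      ∀ c, h c = c → h = 1 := fun _ hh _ =>
    Perm.eq_one_of_mem_zpowers_of_apply_eq hσ <|
      Subgroup.zpowers_le.mpr (pow_mem (Subgroup.mem_zpowers _) _) hh
  simp only [hYnat, hb, map_pow]
  exact Perm.sum_card_fixedPoints_pow_mul (Level.trunc_surjective (Nat.sub_le n 1))
    (Perm.exists_pow_pow_orderOf_apply_eq_iff (levelHom_semiconj_trunc a _) hσ hτ) hfree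
    (semiconj_trunc_of_mem_Ginf g.2 _)

theorem integrable_Ynat {G : Subgroup (TreeAut d)} (μ : Measure (Ginf G))
    [IsFiniteMeasureOnCompacts μ] (n : ℕ) : Integrable (fun g => (Ynat G n g : ℝ)) μ :=
  ((continuous_of_discreteTopology (f := ((↑) : ℕ → ℝ))).comp
    (continuous_Ynat G n)).integrable_of_hasCompactSupport (HasCompactSupport.of_compactSpace _)

end Tree

open MeasureTheory in
theorem fixedPointProcess_martingale_general {d : ℕ} (hd : 2 ≤ d) (G : Subgroup (TreeAut d))
    (hst : ∃ g ∈ G, SphericallyTransitive g)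
    (μ : Measure (Ginf G)) [μ.IsHaarMeasure]
    (n : ℕ) (hn : 2 ≤ n) (t : ℕ → ℕ) :
    ∫ g in {g : Ginf G | ∀ i : ℕ, 1 ≤ i → i ≤ n - 1 → Ynat G i g = t i},
        (Ynat G n g : ℝ) ∂μ
      = (t (n - 1) : ℝ) *
        (μ {g : Ginf G | ∀ i : ℕ, 1 ≤ i → i ≤ n - 1 → Ynat G i g = t i}).toReal := by
  have : NeZero d := ⟨by omega⟩
  obtain ⟨a, haG, ha⟩ := hst
  set E := {g : Ginf G | ∀ i : ℕ, 1 ≤ i → i ≤ n - 1 → Ynat G i g = t i}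
  set D := orderOf (levelHom d (n - 1) a)
  set b : Ginf G := ⟨prodHom d (a ^ D),
    Subgroup.le_topologicalClosure _ (Subgroup.mem_map_of_mem _ (pow_mem haG D))⟩
  set e := orderOf ((b : Π m : ℕ, Perm (Level d m)) n)
  have hbE : ∀ g, b * g ∈ E ↔ g ∈ E := fun g =>
    forall₃_congr fun i _ hi => by
      rw [Ynat_mul_of_apply_eq_one (levelHom_eq_one_of_le hi
        (by rw [map_pow, pow_orderOf_eq_one]))]
  have hsum : ∀ g ∈ E, ∑ j ∈ range e, (Ynat G n (b ^ j * g) : ℝ) = e * t (n - 1) := by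
    intro g hg
    rw [← hg (n - 1) (by omega) le_rfl]
    exact_mod_cast sum_Ynat_pow_mul ha hn rfl g
  have hE : MeasurableSet E := by
    simp only [E, Set.ofPred_forall]
    exact .iInter fun i => .iInter fun _ => .iInter fun _ =>
      measurableSet_eq_fun (continuous_Ynat G i).measurable measurable_const
  have key := setIntegral_sum_pow_mul μ (integrable_Ynat μ n) hbE e
  rw [setIntegral_congr_fun hE hsum, setIntegral_const, smul_eq_mul, nsmul_eq_mul] at key
  have he : (e : ℝ) ≠ 0 := by exact_mod_cast (orderOf_pos _).ne'
  rw [Measure.real_def] at key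
  apply mul_left_cancel₀ he
  rw [← key]
  ring

open MeasureTheory in
/-- The fixed-point process is a martingale: if `G ≤ Aut(X*)` has a spherically
transitive element then, for `n ≥ 2` and any values `t 1, …, t (n-1)` such that the event
`{Y_1 = t 1, …, Y_{n-1} = t (n-1)}` has positive measure, the conditional expectation of
`Y_n` on this event equals `t (n-1)`. -/
theorem fixedPointProcess_martingale {d : ℕ} (hd : 2 ≤ d) (G : Subgroup (TreeAut d))
    (hst : ∃ g ∈ G, SphericallyTransitive g)
    (μ : Measure (Ginf G)) [μ.IsHaarMeasure] [IsProbabilityMeasure μ]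
    (n : ℕ) (hn : 2 ≤ n) (t : ℕ → ℕ)
    (hpos : 0 < μ {g : Ginf G | ∀ i : ℕ, 1 ≤ i → i ≤ n - 1 → Ynat G i g = t i}) :
    ∫ g in {g : Ginf G | ∀ i : ℕ, 1 ≤ i → i ≤ n - 1 → Ynat G i g = t i},
        (Ynat G n g : ℝ) ∂μ
      = (t (n - 1) : ℝ) *
        (μ {g : Ginf G | ∀ i : ℕ, 1 ≤ i → i ≤ n - 1 → Ynat G i g = t i}).toReal :=
  fixedPointProcess_martingale_general hd G hst μ n hn t
end

section
/- Let T = (π_1, …, π_n) be a tree-like multi-set of permutations of a finite set X, let I ⊆ {1, …, n} be non-empty, and let σ be the product of the permutations π_i for i ∈ I (taken in any fixed order). If σ(x) = x for some x ∈ X, then π_i(x) = x for every i ∈ I. -/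
/-- The cycle graph of a multi-set (indexed family) of permutations of `X`: a bipartite
graph whose white vertices are the points of `X` and whose black vertices are the cycles
of length at least 2 of the permutations (counted with multiplicity over the index set),
a white vertex being joined to a cycle exactly when the cycle moves it. -/
def cycleGraph {I X : Type*} [Fintype X] [DecidableEq X] (π : I → Equiv.Perm X) :
    SimpleGraph (X ⊕ {p : I × Equiv.Perm X // p.2 ∈ (π p.1).cycleFactorsFinset}) where
  Adj a b := ∃ (x : X) (c : {p : I × Equiv.Perm X // p.2 ∈ (π p.1).cycleFactorsFinset}),
    c.1.2 x ≠ x ∧ ((a = Sum.inl x ∧ b = Sum.inr c) ∨ (a = Sum.inr c ∧ b = Sum.inl x))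
  symm := by
    constructor
    rintro a b ⟨x, c, hc, (⟨rfl, rfl⟩ | ⟨rfl, rfl⟩)⟩
    · exact ⟨x, c, hc, Or.inr ⟨rfl, rfl⟩⟩
    · exact ⟨x, c, hc, Or.inl ⟨rfl, rfl⟩⟩
  loopless := by
    constructor
    rintro a ⟨x, c, hc, (⟨rfl, h⟩ | ⟨rfl, h⟩)⟩ <;> simp at h

/-- A multi-set (indexed family) of permutations of `X` is tree-like if its cycle graph
is a tree. -/
def TreeLikeFamily {I X : Type*} [Fintype X] [DecidableEq X] (π : I → Equiv.Perm X) :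
    Prop :=
  (cycleGraph π).IsTree

/-- The number of fixed points of a permutation of a finite set. -/
def fixCard {X : Type*} [Fintype X] [DecidableEq X] (σ : Equiv.Perm X) : ℕ :=
  (Finset.univ.filter fun x => σ x = x).card

/-!
Follow the trajectory of `x` through the factors of the product, the last factor first. A factor
`π i` moving the current point `y` carries it to `π i y` along the path `y — c — π i y` of the
cycle graph, where `c` is the cycle of `π i` through `y`. Let `c` be the first cycle that moves
`x`; since the indices are distinct, every later step passes through a cycle of another
permutation, so `σ x` is joined to `c` without using the edge `x — c`. If `σ x = x`, that edge
is therefore not a bridge, which is impossible in a tree.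
-/

open Equiv

lemma prod_map_apply_eq_self_of_forall {I X : Type*} {π : I → Perm X} {l : List I} {x : X}
    (h : ∀ i ∈ l, π i x = x) :
    (l.map π).prod x = x := by
  have : (l.map π).prod ∈ MulAction.stabilizer (Perm X) x :=
    Subgroup.list_prod_mem _ (by simpa [Perm.smul_def] using h)
  simpa [Perm.smul_def] using this

section

variable {I X : Type*} [Fintype X] [DecidableEq X] {π : I → Perm X}

lemma cycleGraph_adj_inl_inr {y : X}
    {c : {p : I × Perm X // p.2 ∈ (π p.1).cycleFactorsFinset}} :
    (cycleGraph π).Adj (.inl y) (.inr c) ↔ c.1.2 y ≠ y := by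
  constructor
  · rintro ⟨z, d, hd, ⟨⟨rfl⟩, ⟨rfl⟩⟩ | ⟨h, -⟩⟩
    · exact hd
    · exact absurd h Sum.inl_ne_inr
  · exact fun h ↦ ⟨y, c, h, .inl ⟨rfl, rfl⟩⟩

variable (π) in
def cycleVertexOf (i : I) (y : X) (hy : π i y ≠ y) :
    {p : I × Perm X // p.2 ∈ (π p.1).cycleFactorsFinset} :=
  ⟨(i, (π i).cycleOf y), Perm.cycleOf_mem_cycleFactorsFinset_iff.mpr (Perm.mem_support.mpr hy)⟩

lemma cycleGraph_adj_cycleVertexOf {i : I} {y : X} (hy : π i y ≠ y) :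
    (cycleGraph π).Adj (.inl y) (.inr (cycleVertexOf π i y hy)) := by
  simpa [cycleGraph_adj_inl_inr, cycleVertexOf, Perm.cycleOf_apply_self] using hy

lemma cycleGraph_adj_apply_cycleVertexOf {i : I} {y : X} (hy : π i y ≠ y) :
    (cycleGraph π).Adj (.inl (π i y)) (.inr (cycleVertexOf π i y hy)) := by
  have hy' : π i (π i y) ≠ π i y := fun h ↦ hy ((π i).injective h)
  simpa [cycleGraph_adj_inl_inr, cycleVertexOf, Perm.cycleOf_apply_self,
    Perm.cycleOf_apply_apply_self] using hy'

lemma cycleGraph_deleteEdges_reachable_apply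
    {c : {p : I × Perm X // p.2 ∈ (π p.1).cycleFactorsFinset}} {i : I} (hi : i ≠ c.1.1) (x y : X) :
    ((cycleGraph π).deleteEdges {s(Sum.inl x, Sum.inr c)}).Reachable
      (Sum.inl y) (Sum.inl (π i y)) := by
  by_cases hy : π i y = y
  · rw [hy]
  have hd : cycleVertexOf π i y hy ≠ c := fun h ↦ hi (congrArg (·.1.1) h)
  refine (SimpleGraph.Adj.reachable (v := .inr (cycleVertexOf π i y hy)) ?_).trans
    (SimpleGraph.Adj.reachable ?_) <;>
    simp only [SimpleGraph.deleteEdges_adj, Set.mem_singleton_iff, Sym2.eq_iff,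
      Sum.inr.injEq, reduceCtorEq, hd, and_false, or_false, false_and, not_false_eq_true,
      and_true]
  · exact cycleGraph_adj_cycleVertexOf hy
  · exact (cycleGraph_adj_apply_cycleVertexOf hy).symm

variable (π) in
lemma forall_fixed_or_exists_reachable (l : List I) (hl : l.Nodup) (x : X) :
    (∀ i ∈ l, π i x = x) ∨
      ∃ c : {p : I × Perm X // p.2 ∈ (π p.1).cycleFactorsFinset}, c.1.1 ∈ l ∧ c.1.2 x ≠ x ∧
        ((cycleGraph π).deleteEdges {s(Sum.inl x, Sum.inr c)}).Reachable
          (.inl ((l.map π).prod x)) (.inr c) := by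
  induction l with
  | nil => simp
  | cons a l ih =>
    obtain ⟨ha, hl⟩ := List.nodup_cons.mp hl
    rw [List.map_cons, List.prod_cons, Perm.mul_apply]
    rcases ih hl with hfix | ⟨c, hcl, hcx, hreach⟩
    · by_cases hax : π a x = x
      · exact .inl (List.forall_mem_cons.mpr ⟨hax, hfix⟩)
      right
      refine ⟨cycleVertexOf π a x hax, List.mem_cons_self, ?_, ?_⟩
      · exact cycleGraph_adj_inl_inr.mp (cycleGraph_adj_cycleVertexOf hax)
      · rw [prod_map_apply_eq_self_of_forall hfix]
        refine SimpleGraph.Adj.reachable ?_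
        simpa [Sym2.eq_iff, hax] using cycleGraph_adj_apply_cycleVertexOf hax
    · exact .inr ⟨c, List.mem_cons_of_mem a hcl, hcx,
        ((cycleGraph_deleteEdges_reachable_apply (ne_of_mem_of_not_mem hcl ha).symm x _).symm.trans
          hreach)⟩

end

theorem treeLike_prod_fixed_general {n : ℕ} {X : Type*} [Fintype X] [DecidableEq X]
    (π : Fin n → Equiv.Perm X) (hT : TreeLikeFamily π)
    (l : List (Fin n)) (hnd : l.Nodup)
    (x : X) (hx : (l.map π).prod x = x) :
    ∀ i ∈ l, π i x = x := by
  refine (forall_fixed_or_exists_reachable π l hnd x).resolve_right ?_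
  rintro ⟨c, -, hcx, hreach⟩
  have hbridge : (cycleGraph π).IsBridge s(Sum.inl x, Sum.inr c) :=
    SimpleGraph.isAcyclic_iff_forall_adj_isBridge.mp hT.isAcyclic
      (cycleGraph_adj_inl_inr.mpr hcx)
  rw [hx] at hreach
  exact SimpleGraph.isBridge_iff.mp hbridge hreach

/-- If `(π_1, …, π_n)` is a tree-like multi-set of permutations of a finite set `X` and
`σ` is the product of the `π_i` over a non-empty subset `I` of the indices (listed in any
fixed order, without repetition), then any point fixed by `σ` is fixed by every `π_i`,
`i ∈ I`. -/
theorem treeLike_prod_fixed {n : ℕ} {X : Type*} [Fintype X] [DecidableEq X]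
    (π : Fin n → Equiv.Perm X) (hT : TreeLikeFamily π)
    (l : List (Fin n)) (hne : l ≠ []) (hnd : l.Nodup)
    (x : X) (hx : (l.map π).prod x = x) :
    ∀ i ∈ l, π i x = x :=
  treeLike_prod_fixed_general π hT l hnd x hx
end

section
/- Let T be a tree-like multi-set of permutations of a finite set X with #X = d ≥ 2. Then the total number of cycles of length ≥ 2 of the elements of T (counted with multiplicity over the elements of T) is at most d − 1, with equality if and only if every element of T is a (possibly empty) product of disjoint transpositions. -/
/-! The cycle graph has `#X + N` vertices, `N` the number of cycles, and one edge for each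
pair of a cycle and a point it moves, i.e. `∑ i, #(π i).support` edges. A tree has one edge
fewer than vertices, so `∑ i, #(π i).support + 1 = #X + N`. Every cycle moves at least two
points, so `2 * N ≤ ∑ i, #(π i).support`, whence `N ≤ #X - 1`, with equality exactly when every
cycle is a transposition, i.e. every `π i` is an involution. -/

open Finset

namespace Equiv.Perm
variable {α : Type*} [Fintype α] [DecidableEq α]

theorem sum_card_support_cycleFactorsFinset (σ : Perm α) :
    ∑ c ∈ σ.cycleFactorsFinset, #c.support = #σ.support :=
  σ.sum_cycleType

theorem mul_self_eq_one_iff_forall_card_support_eq_two {σ : Perm α} :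
    σ * σ = 1 ↔ ∀ c ∈ σ.cycleFactorsFinset, #c.support = 2 := by
  simp [← sq, pow_prime_eq_one_iff, cycleType_def]

theorem two_le_card_support_of_mem_cycleFactorsFinset {σ c : Perm α}
    (hc : c ∈ σ.cycleFactorsFinset) : 2 ≤ #c.support :=
  (mem_cycleFactorsFinset_iff.1 hc).1.two_le_card_support

theorem two_mul_card_cycleFactorsFinset_le_card_support (σ : Perm α) :
    2 * #σ.cycleFactorsFinset ≤ #σ.support := by
  rw [← sum_card_support_cycleFactorsFinset, mul_comm, ← smul_eq_mul, ← sum_const]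
  exact sum_le_sum fun c hc => two_le_card_support_of_mem_cycleFactorsFinset hc

theorem two_mul_card_cycleFactorsFinset_eq_card_support_iff {σ : Perm α} :
    2 * #σ.cycleFactorsFinset = #σ.support ↔ σ * σ = 1 := by
  rw [mul_self_eq_one_iff_forall_card_support_eq_two, ← sum_card_support_cycleFactorsFinset,
    mul_comm, ← smul_eq_mul, ← sum_const,
    sum_eq_sum_iff_of_le fun c hc => two_le_card_support_of_mem_cycleFactorsFinset hc]
  simp only [eq_comm]

end Equiv.Perm

section CycleGraph

variable {I X : Type*} [Fintype X] [DecidableEq X] (π : I → Equiv.Perm X)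

noncomputable def cycleGraphEdgeSetEquiv :
    (Σ c : {p : I × Equiv.Perm X // p.2 ∈ (π p.1).cycleFactorsFinset}, c.1.2.support) ≃
      (cycleGraph π).edgeSet :=
  Equiv.ofBijective (fun p => ⟨s(Sum.inl p.2.1, Sum.inr p.1),
      ⟨p.2.1, p.1, Equiv.Perm.mem_support.1 p.2.2, Or.inl ⟨rfl, rfl⟩⟩⟩) <| by
    constructor
    · rintro ⟨c, x, hx⟩ ⟨c', x', hx'⟩ h
      have h := congrArg Subtype.val h
      simp only [Sym2.eq, Sym2.rel_iff', Prod.mk.injEq, Sum.inl.injEq, Sum.inr.injEq,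
        Prod.swap_prod_mk, reduceCtorEq, and_self, or_false] at h
      obtain ⟨rfl, rfl⟩ := h
      rfl
    · rintro ⟨e, he⟩
      induction e using Sym2.ind with
      | _ a b =>
        rw [SimpleGraph.mem_edgeSet] at he
        obtain ⟨x, c, hc, ⟨rfl, rfl⟩ | ⟨rfl, rfl⟩⟩ := he
        · exact ⟨⟨c, x, Equiv.Perm.mem_support.2 hc⟩, rfl⟩
        · exact ⟨⟨c, x, Equiv.Perm.mem_support.2 hc⟩, Subtype.ext Sym2.eq_swap⟩

variable [Fintype I]

theorem sum_cycleGraph_black (f : Equiv.Perm X → ℕ) :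
    ∑ c : {p : I × Equiv.Perm X // p.2 ∈ (π p.1).cycleFactorsFinset}, f c.1.2 =
      ∑ i, ∑ c ∈ (π i).cycleFactorsFinset, f c := by
  rw [← Fintype.sum_equiv (Equiv.subtypeProdEquivSigmaSubtype
      fun i c => c ∈ (π i).cycleFactorsFinset).symm _ _ fun _ => rfl, Fintype.sum_sigma]
  exact Fintype.sum_congr _ _ fun i => sum_coe_sort _ (fun c => f c)

theorem card_cycleGraph_vertices :
    Nat.card (X ⊕ {p : I × Equiv.Perm X // p.2 ∈ (π p.1).cycleFactorsFinset}) =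
      Fintype.card X + ∑ i, #(π i).cycleFactorsFinset := by
  rw [Nat.card_eq_fintype_card, Fintype.card_sum,
    Fintype.card_eq_sum_ones (α := {p : I × Equiv.Perm X // _}), sum_cycleGraph_black π fun _ => 1]
  simp only [card_eq_sum_ones]

theorem card_cycleGraph_edgeSet :
    Nat.card (cycleGraph π).edgeSet = ∑ i, #(π i).support := by
  rw [← Nat.card_congr (cycleGraphEdgeSetEquiv π), Nat.card_sigma]
  simp only [Nat.card_eq_fintype_card, Fintype.card_coe]
  rw [sum_cycleGraph_black π fun c => #c.support]
  simp only [Equiv.Perm.sum_card_support_cycleFactorsFinset]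

end CycleGraph

theorem treeLike_cycle_count_general {I X : Type*} [Fintype I] [Fintype X] [DecidableEq X]
    (π : I → Equiv.Perm X) (hT : TreeLikeFamily π) :
    (∑ i : I, (π i).cycleFactorsFinset.card ≤ Fintype.card X - 1) ∧
      ((∑ i : I, (π i).cycleFactorsFinset.card = Fintype.card X - 1) ↔
        ∀ i : I, π i * π i = 1) := by
  have hcount : ∑ i, #(π i).support + 1 = Fintype.card X + ∑ i, #(π i).cycleFactorsFinset := by
    rw [← card_cycleGraph_edgeSet, ← card_cycleGraph_vertices]
    exact (SimpleGraph.isTree_iff_connected_and_card.1 hT).2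
  have hle : 2 * ∑ i, #(π i).cycleFactorsFinset ≤ ∑ i, #(π i).support := by
    rw [mul_sum]
    exact sum_le_sum fun i _ => (π i).two_mul_card_cycleFactorsFinset_le_card_support
  have hinvol : 2 * ∑ i, #(π i).cycleFactorsFinset = ∑ i, #(π i).support ↔
      ∀ i, π i * π i = 1 := by
    rw [mul_sum, sum_eq_sum_iff_of_le fun i _ =>
      (π i).two_mul_card_cycleFactorsFinset_le_card_support]
    simp only [mem_univ, forall_const,
      Equiv.Perm.two_mul_card_cycleFactorsFinset_eq_card_support_iff]
  refine ⟨by omega, Iff.trans ?_ hinvol⟩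
  omega

/-- For a tree-like multi-set `T` of permutations of a finite set `X` with `#X = d ≥ 2`,
the total number of cycles of length at least 2 of the elements of `T` (counted with
multiplicity over the elements of `T`) is at most `d - 1`, with equality if and only if
every element of `T` is a (possibly empty) product of disjoint transpositions. -/
theorem treeLike_cycle_count {I X : Type*} [Fintype I] [Fintype X] [DecidableEq X]
    (hd : 2 ≤ Fintype.card X)
    (π : I → Equiv.Perm X) (hT : TreeLikeFamily π) :
    (∑ i : I, (π i).cycleFactorsFinset.card ≤ Fintype.card X - 1) ∧
      ((∑ i : I, (π i).cycleFactorsFinset.card = Fintype.card X - 1) ↔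
        ∀ i : I, π i * π i = 1) :=
  treeLike_cycle_count_general π hT
end

section
/- Let f ∈ ℂ[z] be an exceptional polynomial of degree d ≥ 2 with exceptional set Σ = {z_0, z_1}, where z_0 ≠ z_1. Then one of the following holds: (1) f(z_0) = z_0, f(z_1) = z_1, d is odd, and f is linearly conjugate to T_d; (2) f(z_0) = z_1, f(z_1) = z_0, d is odd, and f is linearly conjugate to −T_d; (3) f(z_0) = f(z_1) ∈ {z_0, z_1}, d is even, and f is linearly conjugate to T_d. -/
/-- Two polynomials are linearly conjugate: `f = L ∘ g ∘ L⁻¹` for some affine map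
`L(z) = az + b`, `a ≠ 0`; equivalently `f ∘ L = L ∘ g`. -/
def LinConj (f g : Polynomial ℂ) : Prop :=
  ∃ a b : ℂ, a ≠ 0 ∧
    f.comp (Polynomial.C a * Polynomial.X + Polynomial.C b) =
      (Polynomial.C a * Polynomial.X + Polynomial.C b).comp g

/-!
Let `g = (f - z₀)(f - z₁)` and `p = (X - z₀)(X - z₁) f'²`. At a point `w` with `f w = σ ∈ Σ`
the multiplicity of `w` in `f - σ` is one more than in `f'`; since a non-critical point of
`f⁻¹(Σ)` lies in `Σ`, this is at most the multiplicity of `w` in `p`. Hence `g ∣ p`, and as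
both have degree `2d`, `c g = p` for a constant `c`. Conjugating by the affine map sending
`-1 ↦ z₀` and `1 ↦ z₁` turns this into `c (h² - 1) = (X² - 1) h'²`: leading coefficients give `c = d²`,
and differentiating gives the Chebyshev equation `(1 - X²) h'' = X h' - d² h`, whose only
polynomial solutions are the multiples of `T_d`. Evaluating at `1` forces `h = ±T_d`, and
`T_d(±1) = (±1)^d` sorts out the three cases.
-/

open Polynomial
open Polynomial.Chebyshev (T)

section ChebyshevODE

variable {R : Type*} [CommRing R] {n : ℕ} {y z : R[X]}

def ChebyshevODE (n : ℕ) (y : R[X]) : Prop :=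
  (1 - X ^ 2) * derivative (derivative y) = X * derivative y - (n ^ 2 : R[X]) * y

theorem chebyshevODE_T (R : Type*) [CommRing R] (n : ℕ) : ChebyshevODE n (T R n) := by
  simpa [ChebyshevODE] using
    Chebyshev.one_sub_X_sq_mul_derivative_derivative_T_eq_poly_in_T (R := R) n

theorem ChebyshevODE.sub_C_mul (hy : ChebyshevODE n y) (hz : ChebyshevODE n z) (c : R) :
    ChebyshevODE n (y - C c * z) := by
  unfold ChebyshevODE at *
  simp only [derivative_sub, derivative_C_mul]
  linear_combination hy - C c * hz

theorem ChebyshevODE.coeff_add_two (hy : ChebyshevODE n y) (m : ℕ) :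
    ((m + 1) * (m + 2) : R) * y.coeff (m + 2) = ((m : R) ^ 2 - n ^ 2) * y.coeff m := by
  have h := congrArg (coeff · m) hy
  rcases m with _ | _ | m <;>
    simp only [pow_two, sub_mul, one_mul, mul_one, zero_mul, mul_zero, mul_assoc, zero_add,
      sub_zero, zero_sub, coeff_sub, coeff_derivative, coeff_X_mul, coeff_X_zero, mul_coeff_zero,
      coeff_natCast_mul, coeff_natCast_ite, Nat.cast_add, Nat.cast_one, Nat.cast_zero,
      Nat.cast_ofNat, Nat.reduceAdd, reduceIte] at h <;>
    push_cast <;> linear_combination h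

theorem ChebyshevODE.natDegree_eq [IsDomain R] [CharZero R] (hy : ChebyshevODE n y)
    (hy0 : y ≠ 0) : y.natDegree = n := by
  set m := y.natDegree
  -- at the top degree `m` the recursion reads `(m² - n²) yₘ = 0`
  have h := hy.coeff_add_two m
  rw [coeff_eq_zero_of_natDegree_lt (by omega : m < m + 2), mul_zero, eq_comm,
    mul_eq_zero, coeff_natDegree, leadingCoeff_eq_zero, sub_eq_zero, or_iff_left hy0] at h
  exact Nat.pow_left_injective two_ne_zero (by exact_mod_cast h)

theorem ChebyshevODE.eq_C_mul_T {K : Type*} [Field K] [CharZero K] {y : K[X]}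
    (hy : ChebyshevODE n y) : y = C (y.coeff n / 2 ^ (n - 1)) * T K n := by
  set z := y - C (y.coeff n / 2 ^ (n - 1)) * T K n
  have hz : z.coeff n = 0 := by
    have := Chebyshev.leadingCoeff_T K n
    simp_all [z, ← coeff_natDegree]
  by_contra hne
  have hz0 : z ≠ 0 := sub_ne_zero.mpr hne
  have hdeg : z.natDegree = n := (hy.sub_C_mul (chebyshevODE_T K n) _).natDegree_eq hz0
  exact hz0 (leadingCoeff_eq_zero.mp (by rwa [leadingCoeff, hdeg]))

end ChebyshevODE

theorem Polynomial.Chebyshev.T_comp_neg_X_of_even {R : Type*} [CommRing R] [IsDomain R] [Infinite R]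
    {n : ℤ} (hn : Even n) : (T R n).comp (-X) = T R n :=
  Polynomial.funext fun x => by simp [Chebyshev.T_eval_neg, Int.negOnePow_even _ hn]

section SqSubOneIdentity

variable {R : Type*} [CommRing R] [IsDomain R] [CharZero R] {h : R[X]} {c : R}

theorem eq_natDegree_sq_of_C_mul_sq_sub_one (hh : 0 < h.natDegree)
    (H : C c * (h ^ 2 - 1) = (X ^ 2 - 1) * derivative h ^ 2) : c = (h.natDegree : R) ^ 2 := by
  have hlc : (h ^ 2 - 1).leadingCoeff = h.leadingCoeff ^ 2 := by
    rw [leadingCoeff_sub_of_degree_lt, leadingCoeff_pow]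
    rw [degree_one, ← natDegree_pos_iff_degree_pos, natDegree_pow]
    omega
  have := congrArg leadingCoeff H
  rw [leadingCoeff_mul, leadingCoeff_mul, leadingCoeff_C, hlc, leadingCoeff_pow,
    leadingCoeff_derivative, leadingCoeff_X_pow_sub_one two_pos, one_mul, mul_pow,
    mul_comm] at this
  exact mul_left_cancel₀ (pow_ne_zero 2 (leadingCoeff_ne_zero.mpr (ne_zero_of_natDegree_gt hh)))
    this

theorem chebyshevODE_of_C_mul_sq_sub_one (hh : 0 < h.natDegree)
    (H : C c * (h ^ 2 - 1) = (X ^ 2 - 1) * derivative h ^ 2) : ChebyshevODE h.natDegree h := by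
  have hc := eq_natDegree_sq_of_C_mul_sq_sub_one hh H
  have hD := congrArg derivative H
  simp only [derivative_mul, derivative_C, derivative_sub, derivative_pow,
    derivative_one, derivative_X] at hD
  have h2 : (2 : R[X]) * derivative h ≠ 0 :=
    mul_ne_zero two_ne_zero (derivative_ne_zero.mpr hh.ne')
  rw [ChebyshevODE]
  apply mul_left_cancel₀ h2
  subst hc
  simp only [map_pow, map_natCast] at hD
  linear_combination hD

theorem eq_T_or_eq_neg_T_of_C_mul_sq_sub_one {K : Type*} [Field K] [CharZero K] {h : K[X]}
    {c : K} (hh : 0 < h.natDegree) (H : C c * (h ^ 2 - 1) = (X ^ 2 - 1) * derivative h ^ 2) :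
    h = T K h.natDegree ∨ h = -T K h.natDegree := by
  set k := h.coeff h.natDegree / 2 ^ (h.natDegree - 1)
  have hk : h = C k * T K h.natDegree := (chebyshevODE_of_C_mul_sq_sub_one hh H).eq_C_mul_T
  have hc : c ≠ 0 := by
    rw [eq_natDegree_sq_of_C_mul_sq_sub_one hh H]
    exact pow_ne_zero 2 (Nat.cast_ne_zero.mpr hh.ne')
  have hk1 : k * k = 1 := by
    have := congrArg (eval 1) H
    conv_lhs at this => rw [hk]
    simp only [eval_mul, eval_C, eval_sub, eval_pow, Chebyshev.T_eval_one, mul_one, eval_one,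
      eval_X, one_pow, sub_self, zero_mul, mul_eq_zero] at this
    linear_combination this.resolve_left hc
  rcases mul_self_eq_one_iff.mp hk1 with hk1 | hk1
  · left; conv_lhs => rw [hk, hk1, C_1, one_mul]
  · right; conv_lhs => rw [hk, hk1, C_neg, C_1, neg_one_mul]

end SqSubOneIdentity

theorem sub_C_ne_zero_of_natDegree_pos {R : Type*} [Ring R] {f : R[X]} (hf : 0 < f.natDegree)
    (σ : R) : f - C σ ≠ 0 :=
  ne_zero_of_natDegree_gt (n := 0) (by rwa [natDegree_sub_C])

section RootMultiplicity

variable {R : Type*} [CommRing R] [IsDomain R] [CharZero R] {f : R[X]}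

theorem rootMultiplicity_sub_C_eq_add_one (hf : 0 < f.natDegree) {w : R} (σ : R)
    (hw : f.eval w = σ) :
    rootMultiplicity w (f - C σ) = rootMultiplicity w (derivative f) + 1 := by
  have hroot : (f - C σ).IsRoot w := by simp [hw]
  have hpos := (rootMultiplicity_pos (sub_C_ne_zero_of_natDegree_pos hf σ)).mpr hroot
  have := derivative_rootMultiplicity_of_root hroot
  rw [derivative_sub, derivative_C, sub_zero] at this
  omega

theorem rootMultiplicity_sub_C_mul_sub_C_le (hf : 0 < f.natDegree) {z₀ z₁ : R} (hz : z₀ ≠ z₁)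
    (hpre : ∀ z, f.eval z = z₀ ∨ f.eval z = z₁ → (derivative f).eval z ≠ 0 → z = z₀ ∨ z = z₁)
    (w : R) :
    rootMultiplicity w ((f - C z₀) * (f - C z₁)) ≤
      rootMultiplicity w ((X - C z₀) * (X - C z₁) * derivative f ^ 2) := by
  have hne := sub_C_ne_zero_of_natDegree_pos hf
  have hf' : derivative f ≠ 0 := derivative_ne_zero.mpr hf.ne'
  have hX : (X - C z₀) * (X - C z₁) ≠ 0 := mul_ne_zero (X_sub_C_ne_zero z₀) (X_sub_C_ne_zero z₁)
  have hcrit : f.eval w = z₀ ∨ f.eval w = z₁ →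
      1 ≤ rootMultiplicity w (derivative f) + rootMultiplicity w ((X - C z₀) * (X - C z₁)) := by
    intro hw
    by_cases hd : (derivative f).eval w = 0
    · have := (rootMultiplicity_pos hf').mpr hd
      omega
    · have := (rootMultiplicity_pos (x := w) hX).mpr
        (by rcases hpre w hw hd with h | h <;> simp [h])
      omega
  rw [rootMultiplicity_mul (mul_ne_zero (hne z₀) (hne z₁)),
    rootMultiplicity_mul (mul_ne_zero hX (pow_ne_zero 2 hf')), pow_two,
    rootMultiplicity_mul (mul_ne_zero hf' hf')]
  by_cases h₀ : f.eval w = z₀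
  · rw [rootMultiplicity_sub_C_eq_add_one hf z₀ h₀,
      rootMultiplicity_eq_zero (p := f - C z₁) (by simp [h₀, sub_eq_zero, hz])]
    have := hcrit (.inl h₀)
    omega
  by_cases h₁ : f.eval w = z₁
  · rw [rootMultiplicity_sub_C_eq_add_one hf z₁ h₁,
      rootMultiplicity_eq_zero (p := f - C z₀) (by simp [h₁, sub_eq_zero, hz.symm])]
    have := hcrit (.inr h₁)
    omega
  rw [rootMultiplicity_eq_zero (p := f - C z₀) (by simp [h₀, sub_eq_zero]),
    rootMultiplicity_eq_zero (p := f - C z₁) (by simp [h₁, sub_eq_zero])]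
  omega

end RootMultiplicity

theorem exists_C_mul_eq_of_rootMultiplicity_le {K : Type*} [Field K] {g p : K[X]}
    (hg : g.Splits) (hg0 : g ≠ 0) (hmult : ∀ w, rootMultiplicity w g ≤ rootMultiplicity w p)
    (hdeg : p.natDegree ≤ g.natDegree) : ∃ c : K, C c * g = p := by
  classical
  obtain ⟨q, rfl⟩ : g ∣ p := hg.dvd_of_roots_le_roots hg0
    (Multiset.le_iff_count.mpr fun w => by simpa only [count_roots] using hmult w)
  rcases eq_or_ne q 0 with rfl | hq0
  · exact ⟨0, by simp⟩
  have hq : q.natDegree = 0 := by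
    rw [natDegree_mul hg0 hq0] at hdeg
    omega
  exact ⟨q.coeff 0, by rw [mul_comm, ← eq_C_of_natDegree_eq_zero hq]⟩

theorem exists_C_mul_sub_C_mul_sub_C_eq {K : Type*} [Field K] [IsAlgClosed K] [CharZero K]
    {f : K[X]} (hf : 0 < f.natDegree) {z₀ z₁ : K} (hz : z₀ ≠ z₁)
    (hpre : ∀ z, f.eval z = z₀ ∨ f.eval z = z₁ → (derivative f).eval z ≠ 0 → z = z₀ ∨ z = z₁) :
    ∃ c : K, C c * ((f - C z₀) * (f - C z₁)) = (X - C z₀) * (X - C z₁) * derivative f ^ 2 := by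
  have hne := sub_C_ne_zero_of_natDegree_pos hf
  refine exists_C_mul_eq_of_rootMultiplicity_le (IsAlgClosed.splits _)
    (mul_ne_zero (hne z₀) (hne z₁)) (rootMultiplicity_sub_C_mul_sub_C_le hf hz hpre) ?_
  refine (natDegree_mul_le.trans (add_le_add natDegree_mul_le natDegree_pow_le)).trans ?_
  rw [natDegree_X_sub_C, natDegree_X_sub_C, natDegree_derivative,
    natDegree_mul (hne _) (hne _), natDegree_sub_C, natDegree_sub_C]
  omega

section AffineConjugation

variable {K : Type*} [Field K] {f h : K[X]} {a b : K}

theorem exists_comp_eq_comp (f : K[X]) (ha : a ≠ 0) (b : K) :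
    ∃ h : K[X], f.comp (C a * X + C b) = (C a * X + C b).comp h ∧ h.natDegree = f.natDegree := by
  set h := C a⁻¹ * (f.comp (C a * X + C b) - C b)
  have hfh : f.comp (C a * X + C b) = (C a * X + C b).comp h := by
    simp only [h, add_comp, mul_comp, C_comp, X_comp, ← mul_assoc, ← C_mul, mul_inv_cancel₀ ha,
      C_1, one_mul, sub_add_cancel]
  refine ⟨h, hfh, ?_⟩
  have := congrArg natDegree hfh
  rwa [natDegree_comp, natDegree_comp, natDegree_linear ha, mul_one, one_mul, eq_comm] at this

theorem derivative_comp_eq_of_comp_eq_comp (ha : a ≠ 0)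
    (hfh : f.comp (C a * X + C b) = (C a * X + C b).comp h) :
    (derivative f).comp (C a * X + C b) = derivative h := by
  have := congrArg derivative hfh
  simp only [derivative_comp, derivative_add, derivative_C_mul, derivative_X, derivative_C,
    mul_one, add_zero, C_comp] at this
  exact mul_left_cancel₀ (C_ne_zero.mpr ha) (by linear_combination this)

theorem C_mul_sq_sub_one_of_comp_eq_comp {c : K} (ha : a ≠ 0)
    (hfh : f.comp (C a * X + C b) = (C a * X + C b).comp h)
    (H : C c * ((f - C (b - a)) * (f - C (b + a))) =
      (X - C (b - a)) * (X - C (b + a)) * derivative f ^ 2) :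
    C c * (h ^ 2 - 1) = (X ^ 2 - 1) * derivative h ^ 2 := by
  have := congrArg (comp · (C a * X + C b)) H
  simp only [mul_comp, sub_comp, add_comp, C_comp, X_comp, pow_comp, hfh,
    derivative_comp_eq_of_comp_eq_comp ha hfh] at this
  refine mul_left_cancel₀ (pow_ne_zero 2 (C_ne_zero.mpr ha)) ?_
  simp only [C_sub, C_add] at this
  linear_combination this

theorem eval_of_comp_eq_comp (hfh : f.comp (C a * X + C b) = (C a * X + C b).comp h) (x : K) :
    f.eval (a * x + b) = a * h.eval x + b := by
  simpa using congrArg (eval x) hfh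

end AffineConjugation

theorem LinConj.neg_comp_neg_X {f g : ℂ[X]} (hfg : LinConj f g) : LinConj f (-g.comp (-X)) := by
  obtain ⟨a, b, ha, hab⟩ := hfg
  refine ⟨-a, b, neg_ne_zero.mpr ha, ?_⟩
  have := congrArg (comp · (-X)) hab
  simp only [comp_assoc, add_comp, mul_comp, C_comp, X_comp] at this ⊢
  rw [C_neg, neg_mul_neg, ← this, mul_neg, neg_mul]

/-- Classification of exceptional polynomials with a two-point exceptional set
`Σ = {z₀, z₁}`: `f` is linearly conjugate to `±T_d`, in one of three ways according to
the action of `f` on `Σ` and the parity of `d`. -/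
theorem exceptional_two_point_classification (f : Polynomial ℂ) (d : ℕ) (hd : 2 ≤ d)
    (hdeg : f.natDegree = d) (z₀ z₁ : ℂ) (hz : z₀ ≠ z₁)
    (hexc : {z : ℂ | f.eval z ∈ ({z₀, z₁} : Set ℂ)} \
        {z : ℂ | (Polynomial.derivative f).eval z = 0} = {z₀, z₁}) :
    (f.eval z₀ = z₀ ∧ f.eval z₁ = z₁ ∧ Odd d ∧
      LinConj f (Polynomial.Chebyshev.T ℂ d)) ∨
    (f.eval z₀ = z₁ ∧ f.eval z₁ = z₀ ∧ Odd d ∧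
      LinConj f (-Polynomial.Chebyshev.T ℂ d)) ∨
    (f.eval z₀ = f.eval z₁ ∧ (f.eval z₀ = z₀ ∨ f.eval z₀ = z₁) ∧ Even d ∧
      LinConj f (Polynomial.Chebyshev.T ℂ d)) := by
  have hf : 0 < f.natDegree := by omega
  obtain ⟨c, hc⟩ := exists_C_mul_sub_C_mul_sub_C_eq hf hz fun z hfz hz' =>
    hexc.subset ⟨hfz, hz'⟩
  obtain ⟨a, b, ha, rfl, rfl⟩ : ∃ a b : ℂ, a ≠ 0 ∧ z₀ = b - a ∧ z₁ = b + a :=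
    ⟨(z₁ - z₀) / 2, (z₁ + z₀) / 2, by simpa [sub_eq_zero] using hz.symm, by ring, by ring⟩
  obtain ⟨h, hconj, hhdeg⟩ := exists_comp_eq_comp f ha b
  have hT : h = T ℂ d ∨ h = -T ℂ d := by
    rw [← hdeg, ← hhdeg]
    exact eq_T_or_eq_neg_T_of_C_mul_sq_sub_one (hhdeg ▸ hf)
      (C_mul_sq_sub_one_of_comp_eq_comp ha hconj hc)
  have hlin : LinConj f h := ⟨a, b, ha, hconj⟩
  have hf₀ : f.eval (b - a) = a * h.eval (-1) + b := by
    simpa [sub_eq_neg_add] using eval_of_comp_eq_comp hconj (-1)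
  have hf₁ : f.eval (b + a) = a * h.eval 1 + b := by
    simpa [add_comm] using eval_of_comp_eq_comp hconj 1
  have hTone : (T ℂ d).eval 1 = 1 := Chebyshev.T_eval_one ℂ d
  have hTneg : (T ℂ d).eval (-1) = (-1) ^ d := by simp
  rcases Nat.even_or_odd d with hpar | hpar <;> rcases hT with rfl | rfl <;>
    simp only [eval_neg, hTone, hTneg, hpar.neg_one_pow] at hf₀ hf₁
  · exact .inr (.inr ⟨hf₀.trans hf₁.symm, .inr (by rw [hf₀]; ring), hpar, hlin⟩)
  · refine .inr (.inr ⟨hf₀.trans hf₁.symm, .inl (by rw [hf₀]; ring), hpar, ?_⟩)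
    simpa [Chebyshev.T_comp_neg_X_of_even (hpar.natCast (α := ℤ))] using hlin.neg_comp_neg_X
  · exact .inl ⟨by rw [hf₀]; ring, by rw [hf₁]; ring, hpar, hlin⟩
  · exact .inr (.inl ⟨by rw [hf₀]; ring, by rw [hf₁]; ring, hpar, hlin⟩)
end

section
/- Let f ∈ ℂ[z] be a polynomial of degree d ≥ 2 and let Σ ⊂ ℂ be a finite non-empty set with f^{−1}(Σ) ∖ Crit(f) = Σ, where Crit(f) is the set of zeros of f′. Then #Σ ≤ 2. -/
/-!
Write `n = #E` and `d = deg f`. Each fibre `f⁻¹(σ)` consists of `d` points counted with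
multiplicity, and a point of multiplicity `m` is a zero of `f'` of order `m - 1`; so for each
`σ` the number of distinct points of `f⁻¹(σ)` plus the orders of `f'` at them equals `d`.
Summing over `σ ∈ E`, the distinct points of `f⁻¹(E)` lie in `E ∪ Crit(f)`, of size at most
`n + (d - 1)`, and the orders of `f'` add up to at most `d - 1`. Hence `n d ≤ n + 2 (d - 1)`,
i.e. `n ≤ 2`.
-/

open Polynomial Finset

namespace Polynomial

variable {R : Type*} [CommRing R] [IsDomain R] [DecidableEq R]

noncomputable def fiber (f : R[X]) (c : R) : Finset R := (f - C c).roots.toFinset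

theorem eval_eq_of_mem_fiber {f : R[X]} {c z : R} (hz : z ∈ f.fiber c) : f.eval z = c := by
  rw [fiber, Multiset.mem_toFinset, mem_roots'] at hz
  simpa [sub_eq_zero] using hz.2

theorem pairwiseDisjoint_fiber (f : R[X]) (S : Set R) : S.PairwiseDisjoint f.fiber :=
  fun _ _ _ _ hne => Finset.disjoint_left.mpr fun _ hz hz' =>
    hne ((eval_eq_of_mem_fiber hz).symm.trans (eval_eq_of_mem_fiber hz'))

theorem sum_rootMultiplicity_le_natDegree (p : R[X]) (s : Finset R) :
    ∑ z ∈ s, p.rootMultiplicity z ≤ p.natDegree :=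
  calc ∑ z ∈ s, p.rootMultiplicity z
      ≤ ∑ z ∈ s ∪ p.roots.toFinset, p.roots.count z := by
        simp only [count_roots]
        exact sum_le_sum_of_subset subset_union_left
    _ = Multiset.card p.roots :=
        Multiset.sum_count_eq_card fun _ hz => mem_union_right _ (Multiset.mem_toFinset.mpr hz)
    _ ≤ p.natDegree := card_roots' p

theorem card_fiber_add_sum_rootMultiplicity_derivative {K : Type*} [Field K] [IsAlgClosed K]
    [CharZero K] [DecidableEq K] {f : K[X]} (hf : 0 < f.natDegree) (c : K) :
    #(f.fiber c) + ∑ z ∈ f.fiber c, f.derivative.rootMultiplicity z = f.natDegree := by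
  have hne : f - C c ≠ 0 := ne_zero_of_natDegree_gt ((natDegree_sub_C (a := c)).symm ▸ hf)
  rw [← natDegree_sub_C (a := c), ← IsAlgClosed.card_roots_eq_natDegree,
    ← Multiset.toFinset_sum_count_eq, card_eq_sum_ones, ← sum_add_distrib]
  refine sum_congr rfl fun z hz => ?_
  have hroot : (f - C c).IsRoot z := by simp [IsRoot, eval_eq_of_mem_fiber hz]
  have hpos := (rootMultiplicity_pos hne).mpr hroot
  have hder := derivative_rootMultiplicity_of_root hroot
  rw [derivative_sub, derivative_C, sub_zero] at hder
  rw [count_roots]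
  omega

theorem card_biUnion_fiber_add_sum_rootMultiplicity_derivative {K : Type*} [Field K]
    [IsAlgClosed K] [CharZero K] [DecidableEq K] {f : K[X]} (hf : 0 < f.natDegree)
    (S : Finset K) :
    #(S.biUnion f.fiber) + ∑ z ∈ S.biUnion f.fiber, f.derivative.rootMultiplicity z =
      #S * f.natDegree := by
  rw [card_biUnion (pairwiseDisjoint_fiber f _), sum_biUnion (pairwiseDisjoint_fiber f _),
    ← sum_add_distrib,
    sum_congr rfl fun c _ => card_fiber_add_sum_rootMultiplicity_derivative hf c, sum_const,
    smul_eq_mul]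

end Polynomial

theorem exceptional_set_card_le_two_general (f : Polynomial ℂ) (hdeg : 2 ≤ f.natDegree)
    (E : Set ℂ) (hfin : E.Finite)
    (hexc : {z : ℂ | f.eval z ∈ E} \ {z : ℂ | (Polynomial.derivative f).eval z = 0} = E) :
    E.ncard ≤ 2 := by
  classical
  set d := f.natDegree
  set S := hfin.toFinset
  set U := S.biUnion f.fiber
  set crit := (derivative f).roots.toFinset
  have hf' : derivative f ≠ 0 := fun h => by
    have := derivative_eq_zero.mp h
    omega
  have hcount : #U + ∑ z ∈ U, (derivative f).rootMultiplicity z = #S * d :=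
    card_biUnion_fiber_add_sum_rootMultiplicity_derivative (by omega : 0 < d) S
  have hU : U ⊆ S ∪ crit := by
    intro z hz
    obtain ⟨σ, hσ, hzσ⟩ := mem_biUnion.mp hz
    have hfz : f.eval z ∈ E := by rw [eval_eq_of_mem_fiber hzσ]; exact hfin.mem_toFinset.mp hσ
    by_cases hc : (derivative f).eval z = 0
    · exact mem_union_right _ (Multiset.mem_toFinset.mpr ((mem_roots hf').mpr hc))
    · exact mem_union_left _ (hfin.mem_toFinset.mpr (hexc ▸ ⟨hfz, hc⟩))
  have hcrit : #crit ≤ d - 1 :=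
    (Multiset.toFinset_card_le _).trans ((card_roots' _).trans (natDegree_derivative_le f))
  have hmult : ∑ z ∈ U, (derivative f).rootMultiplicity z ≤ d - 1 :=
    (sum_rootMultiplicity_le_natDegree _ U).trans (natDegree_derivative_le f)
  have hUcard : #U ≤ #S + (d - 1) :=
    (card_le_card hU).trans ((card_union_le _ _).trans (by omega))
  have hbound : #S * d ≤ #S + 2 * (d - 1) := by omega
  obtain ⟨e, he⟩ : ∃ e, d = e + 1 := ⟨d - 1, by omega⟩
  rw [he, Nat.add_sub_cancel, Nat.mul_succ] at hbound
  rw [Set.ncard_eq_toFinset_card E hfin]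
  exact Nat.le_of_mul_le_mul_right (by omega : #S * e ≤ 2 * e) (by omega)

/-- If `f ∈ ℂ[z]` has degree at least 2 and `E ⊆ ℂ` is a finite non-empty set with
`f⁻¹(E) \ Crit(f) = E`, then `E` has at most two elements. -/
theorem exceptional_set_card_le_two (f : Polynomial ℂ) (hdeg : 2 ≤ f.natDegree)
    (E : Set ℂ) (hfin : E.Finite) (hne : E.Nonempty)
    (hexc : {z : ℂ | f.eval z ∈ E} \ {z : ℂ | (Polynomial.derivative f).eval z = 0} = E) :
    E.ncard ≤ 2 :=
  exceptional_set_card_le_two_general f hdeg E hfin hexc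
end
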